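/- Suppose f : [z₁,z₂] → ℝ is continuous with 0 ≤ f(z) ≤ M on [z₁,z₂], f > 0 on (z₁,z₂), f(z₁)=f(z₂)=0, f differentiable at the endpoints with f'(z₁)>0 and f'(z₂)<0, and let 0 < ε < M^{-1/2}. Then the integral T = ∫_{z₁}^{z₂} (1 - ε² f(z)) / sqrt( f(z)(2 - ε² f(z)) ) dz is finite. -/
import Mathlib


open Set

lemma pointwise_bound_aux (ε M F t c : ℝ) (hF : 0 < F) (hFM : F ≤ M)
    (hεM : ε ^ 2 * M < 1) (hc : 0 < c) (ht : 0 < t) (hct : c * t ≤ F) :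
    |(1 - ε ^ 2 * F) / Real.sqrt (F * (2 - ε ^ 2 * F))| ≤
      (Real.sqrt c)⁻¹ * t ^ (-(1 / 2) : ℝ) := by
  have hε2 : (0:ℝ) ≤ ε ^ 2 := sq_nonneg ε
  have hεF : ε ^ 2 * F < 1 := by nlinarith
  have hN : 0 < 1 - ε ^ 2 * F := by linarith
  have hprod : c * t ≤ F * (2 - ε ^ 2 * F) := by nlinarith
  have hsct : 0 < Real.sqrt (c * t) := Real.sqrt_pos.2 (by positivity)
  have hsle : Real.sqrt (c * t) ≤ Real.sqrt (F * (2 - ε ^ 2 * F)) :=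
    Real.sqrt_le_sqrt hprod
  rw [abs_of_nonneg (div_nonneg hN.le (Real.sqrt_nonneg _))]
  have hεF0 : 0 ≤ ε ^ 2 * F := by positivity
  have key : (1 - ε ^ 2 * F) / Real.sqrt (F * (2 - ε ^ 2 * F)) ≤ 1 / Real.sqrt (c * t) :=
    div_le_div₀ zero_le_one (by linarith) hsct hsle
  refine key.trans_eq ?_
  rw [Real.sqrt_mul hc.le, one_div, mul_inv, Real.rpow_neg ht.le]
  simp [Real.sqrt_eq_rpow]

/-- If f is continuous on [z₁,z₂] with 0 ≤ f ≤ M, positive on (z₁,z₂),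
vanishing at the endpoints with nonzero one-sided derivatives, and
0 < ε < M^{-1/2}, then ∫_{z₁}^{z₂} (1 − ε²f)/√(f(2 − ε²f)) is finite. -/
theorem integral_T_finite (f : ℝ → ℝ) (z₁ z₂ f'₁ f'₂ M ε : ℝ)
    (hz : z₁ < z₂)
    (hcont : ContinuousOn f (Icc z₁ z₂))
    (hbound : ∀ z ∈ Icc z₁ z₂, 0 ≤ f z ∧ f z ≤ M)
    (hpos : ∀ z ∈ Ioo z₁ z₂, 0 < f z)
    (h1 : f z₁ = 0) (h2 : f z₂ = 0)
    (hd1 : HasDerivWithinAt f f'₁ (Icc z₁ z₂) z₁)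
    (hd2 : HasDerivWithinAt f f'₂ (Icc z₁ z₂) z₂)
    (hf'1 : 0 < f'₁) (hf'2 : f'₂ < 0)
    (hε0 : 0 < ε) (hε : ε < (Real.sqrt M)⁻¹) :
    MeasureTheory.IntegrableOn
      (fun z => (1 - ε ^ 2 * f z) / Real.sqrt (f z * (2 - ε ^ 2 * f z)))
      (Ioo z₁ z₂) := by
  set g : ℝ → ℝ := fun z => (1 - ε ^ 2 * f z) / Real.sqrt (f z * (2 - ε ^ 2 * f z)) with hg
  -- M is positive
  have hmid : (z₁ + z₂) / 2 ∈ Ioo z₁ z₂ := ⟨by linarith, by linarith⟩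
  have hM : 0 < M :=
    lt_of_lt_of_le (hpos _ hmid) (hbound _ (Ioo_subset_Icc_self hmid)).2
  have hsM : 0 < Real.sqrt M := Real.sqrt_pos.2 hM
  have hεM : ε ^ 2 * M < 1 := by
    have h1' : ε * Real.sqrt M < 1 := by
      rw [← inv_mul_cancel₀ hsM.ne']
      exact mul_lt_mul_of_pos_right hε hsM
    have h2' : Real.sqrt M * Real.sqrt M = M := Real.mul_self_sqrt hM.le
    nlinarith [mul_pos hε0 hsM]
  -- get δ₁ near z₁ : f z ≥ (f'₁/2)(z - z₁)
  have hslope1 : Filter.Tendsto (slope f z₁) (nhdsWithin z₁ (Icc z₁ z₂ \ {z₁}))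
      (nhds f'₁) := hasDerivWithinAt_iff_tendsto_slope.1 hd1
  have hev1 : ∀ᶠ z in nhdsWithin z₁ (Icc z₁ z₂ \ {z₁}), f'₁ / 2 < slope f z₁ z :=
    hslope1.eventually (eventually_gt_nhds (by linarith))
  obtain ⟨δ₁, hδ₁pos, hδ₁⟩ := Metric.mem_nhdsWithin_iff.1 hev1
  have hslope2 : Filter.Tendsto (slope f z₂) (nhdsWithin z₂ (Icc z₁ z₂ \ {z₂}))
      (nhds f'₂) := hasDerivWithinAt_iff_tendsto_slope.1 hd2
  have hev2 : ∀ᶠ z in nhdsWithin z₂ (Icc z₁ z₂ \ {z₂}), slope f z₂ z < f'₂ / 2 :=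
    hslope2.eventually (eventually_lt_nhds (by linarith))
  obtain ⟨δ₂, hδ₂pos, hδ₂⟩ := Metric.mem_nhdsWithin_iff.1 hev2
  -- choose points a b
  set a : ℝ := z₁ + min δ₁ (z₂ - z₁) / 2 with ha
  set b : ℝ := z₂ - min δ₂ (z₂ - z₁) / 2 with hb
  have hmin1 : 0 < min δ₁ (z₂ - z₁) := lt_min hδ₁pos (by linarith)
  have hmin2 : 0 < min δ₂ (z₂ - z₁) := lt_min hδ₂pos (by linarith)
  have haz : z₁ < a := by simp only [ha]; linarith
  have haz2 : a < z₂ := by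
    have := min_le_right δ₁ (z₂ - z₁); simp only [ha]; linarith
  have hbz : z₁ < b := by
    have := min_le_right δ₂ (z₂ - z₁); simp only [hb]; linarith
  have hbz2 : b < z₂ := by simp only [hb]; linarith
  set a' : ℝ := min a b with ha'
  set b' : ℝ := max a b with hb'
  have ha'1 : z₁ < a' := lt_min haz hbz
  have ha'2 : a' < z₂ := lt_of_le_of_lt (min_le_left _ _) haz2
  have hb'1 : z₁ < b' := lt_of_lt_of_le haz (le_max_left _ _)
  have hb'2 : b' < z₂ := max_lt haz2 hbz2
  have ha'b' : a' ≤ b' := min_le_max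
  -- lower bound for f near z₁
  have hlow1 : ∀ z ∈ Ioc z₁ a', f'₁ / 2 * (z - z₁) ≤ f z := by
    intro z hzm
    have hzI : z ∈ Icc z₁ z₂ := ⟨hzm.1.le, le_trans hzm.2 ha'2.le⟩
    have hne : z ≠ z₁ := ne_of_gt hzm.1
    have hdist : dist z z₁ < δ₁ := by
      rw [Real.dist_eq, abs_of_pos (by linarith [hzm.1] : (0:ℝ) < z - z₁)]
      have h1 : z ≤ a' := hzm.2
      have h2 : a' ≤ a := min_le_left _ _
      have h3 : min δ₁ (z₂ - z₁) ≤ δ₁ := min_le_left _ _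
      simp only [ha] at h2
      linarith
    have hs : f'₁ / 2 < slope f z₁ z := hδ₁ ⟨Metric.mem_ball.2 hdist, hzI, hne⟩
    have hslope_eq : slope f z₁ z = f z / (z - z₁) := by
      rw [slope_def_field, h1]; ring_nf
    rw [hslope_eq] at hs
    have hzpos : (0:ℝ) < z - z₁ := by linarith [hzm.1]
    rw [lt_div_iff₀ hzpos] at hs
    linarith
  -- lower bound for f near z₂
  have hlow2 : ∀ z ∈ Ico b' z₂, -f'₂ / 2 * (z₂ - z) ≤ f z := by
    intro z hzm
    have hzI : z ∈ Icc z₁ z₂ := ⟨le_trans hb'1.le hzm.1, hzm.2.le⟩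
    have hne : z ≠ z₂ := ne_of_lt hzm.2
    have hdist : dist z z₂ < δ₂ := by
      rw [Real.dist_eq, abs_of_neg (by linarith [hzm.2] : z - z₂ < (0:ℝ))]
      have h1 : b' ≤ z := hzm.1
      have h2 : b ≤ b' := le_max_right _ _
      have h3 : min δ₂ (z₂ - z₁) ≤ δ₂ := min_le_left _ _
      simp only [hb] at h2
      linarith
    have hs : slope f z₂ z < f'₂ / 2 := hδ₂ ⟨Metric.mem_ball.2 hdist, hzI, hne⟩
    have hslope_eq : slope f z₂ z = f z / (z - z₂) := by
      rw [slope_def_field, h2]; ring_nf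
    rw [hslope_eq] at hs
    have hzneg : z - z₂ < (0:ℝ) := by linarith [hzm.2]
    rw [div_lt_iff_of_neg hzneg] at hs
    nlinarith
  -- continuity of g on Ioo z₁ z₂
  have hgcont : ContinuousOn g (Ioo z₁ z₂) := by
    have hfc : ContinuousOn f (Ioo z₁ z₂) := hcont.mono Ioo_subset_Icc_self
    apply ContinuousOn.div
    · exact (continuousOn_const.sub (continuousOn_const.mul hfc))
    · exact (hfc.mul (continuousOn_const.sub (continuousOn_const.mul hfc))).sqrt
    · intro z hzm
      have hfz : 0 < f z := hpos z hzm
      have hfM : f z ≤ M := (hbound z (Ioo_subset_Icc_self hzm)).2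
      have hεF : ε ^ 2 * f z < 1 := by nlinarith [sq_nonneg ε]
      have : 0 < f z * (2 - ε ^ 2 * f z) := by nlinarith
      exact (Real.sqrt_pos.2 this).ne'
  -- piece 1 : Ioc z₁ a'
  have hpiece1 : MeasureTheory.IntegrableOn g (Ioc z₁ a') := by
    have hbdd : MeasureTheory.IntegrableOn
        (fun z => (Real.sqrt (f'₁ / 2))⁻¹ * (z - z₁) ^ (-(1 / 2) : ℝ)) (Ioc z₁ a') := by
      have h0 : IntervalIntegrable (fun x : ℝ => x ^ (-(1 / 2) : ℝ)) MeasureTheory.volume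
          0 (a' - z₁) := intervalIntegral.intervalIntegrable_rpow' (by norm_num)
      have h1' := (h0.comp_sub_right z₁).const_mul (Real.sqrt (f'₁ / 2))⁻¹
      rw [zero_add, sub_add_cancel] at h1'
      exact (intervalIntegrable_iff_integrableOn_Ioc_of_le ha'1.le).1 h1'
    refine hbdd.mono' ?_ ?_
    · exact ((hgcont.mono (fun z hzm => ⟨hzm.1, lt_of_le_of_lt hzm.2 ha'2⟩ :
        Ioc z₁ a' ⊆ Ioo z₁ z₂)).aestronglyMeasurable measurableSet_Ioc)
    · refine MeasureTheory.ae_restrict_of_forall_mem measurableSet_Ioc ?_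
      intro z hzm
      have hzoo : z ∈ Ioo z₁ z₂ := ⟨hzm.1, lt_of_le_of_lt hzm.2 ha'2⟩
      exact pointwise_bound_aux ε M (f z) (z - z₁) (f'₁ / 2) (hpos z hzoo)
        (hbound z (Ioo_subset_Icc_self hzoo)).2 hεM (by linarith)
        (by linarith [hzm.1]) (hlow1 z hzm)
  -- piece 3 : Ico b' z₂
  have hpiece3 : MeasureTheory.IntegrableOn g (Ico b' z₂) := by
    have hbdd' : MeasureTheory.IntegrableOn
        (fun z => (Real.sqrt (-f'₂ / 2))⁻¹ * (z₂ - z) ^ (-(1 / 2) : ℝ)) (Ico b' z₂) := by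
      have h0 : IntervalIntegrable (fun x : ℝ => x ^ (-(1 / 2) : ℝ)) MeasureTheory.volume
          0 (z₂ - b') := intervalIntegral.intervalIntegrable_rpow' (by norm_num)
      have h1' := (h0.comp_sub_left z₂).const_mul (Real.sqrt (-f'₂ / 2))⁻¹
      rw [sub_zero, sub_sub_cancel] at h1'
      have h2' := (intervalIntegrable_iff_integrableOn_Ioc_of_le hb'2.le).1 h1'.symm
      have hsing : MeasureTheory.IntegrableOn
          (fun z => (Real.sqrt (-f'₂ / 2))⁻¹ * (z₂ - z) ^ (-(1 / 2) : ℝ)) {b'} := by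
        rw [MeasureTheory.integrableOn_singleton_iff]
        exact Or.inr (by simp)
      refine (hsing.union h2').mono_set ?_
      intro x hx
      rcases eq_or_lt_of_le hx.1 with h | h
      · exact Or.inl (by simp [h.symm])
      · exact Or.inr ⟨h, hx.2.le⟩
    refine hbdd'.mono' ?_ ?_
    · exact ((hgcont.mono (fun z hzm => ⟨lt_of_lt_of_le hb'1 hzm.1, hzm.2⟩ :
        Ico b' z₂ ⊆ Ioo z₁ z₂)).aestronglyMeasurable measurableSet_Ico)
    · refine MeasureTheory.ae_restrict_of_forall_mem measurableSet_Ico ?_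
      intro z hzm
      have hzoo : z ∈ Ioo z₁ z₂ := ⟨lt_of_lt_of_le hb'1 hzm.1, hzm.2⟩
      exact pointwise_bound_aux ε M (f z) (z₂ - z) (-f'₂ / 2) (hpos z hzoo)
        (hbound z (Ioo_subset_Icc_self hzoo)).2 hεM (by linarith)
        (by linarith [hzm.2]) (hlow2 z hzm)
  -- piece 2 : Icc a' b'
  have hpiece2 : MeasureTheory.IntegrableOn g (Icc a' b') := by
    refine (hgcont.mono ?_).integrableOn_Icc
    exact fun z hzm => ⟨lt_of_lt_of_le ha'1 hzm.1, lt_of_le_of_lt hzm.2 hb'2⟩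
  -- combine
  have hcover : Ioo z₁ z₂ ⊆ Ioc z₁ a' ∪ (Icc a' b' ∪ Ico b' z₂) := by
    intro z hzm
    rcases le_or_gt z a' with h | h
    · exact Or.inl ⟨hzm.1, h⟩
    · rcases le_or_gt z b' with h' | h'
      · exact Or.inr (Or.inl ⟨h.le, h'⟩)
      · exact Or.inr (Or.inr ⟨h'.le, hzm.2⟩)
  exact (hpiece1.union (hpiece2.union hpiece3)).mono_set hcover
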